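/- arXiv:1612.03456 — 8 statements merged into one kernel-verified Lean document; each statement's English description precedes it below -/
import Mathlib

section
/- Let G be a finite group with |G| = m, let g ∈ G, and let k be an integer with 1 ≤ k ≤ m. Among all pairs (A, B) where A and B are k-element subsets of G, the number of pairs for which g is NOT expressible as a product ab with a ∈ A and b ∈ B is at most e^{-k²/m} · C(m,k)², where C(m,k) is the binomial coefficient. Equivalently, if A and B are chosen uniformly at random among k-element subsets of G (independently, i.e. sampling without replacement), then Pr[g ∈ AB] ≥ 1 − e^{-k²/m}. -/
/-!
If `g ∉ AB`, then `B` avoids the `k`-set `A⁻¹g`, so for each `A` there are at most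
`C(m-k, k)` choices of `B`. Moreover `C(m-k, k) / C(m, k) = ∏_{i<k} (m-k-i)/(m-i)`, and each
factor is at most `1 - k/m ≤ e^{-k/m}`.
-/

open Finset

theorem Nat.pow_mul_descFactorial_sub_le (m k : ℕ) :
    m ^ k * (m - k).descFactorial k ≤ (m - k) ^ k * m.descFactorial k := by
  simp only [Nat.descFactorial_eq_prod_range]
  calc m ^ k * ∏ i ∈ range k, (m - k - i) = ∏ i ∈ range k, m * (m - k - i) := by
        rw [prod_mul_distrib, prod_const, card_range]
    _ ≤ ∏ i ∈ range k, (m - k) * (m - i) := prod_le_prod' fun i _ => ?_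
    _ = (m - k) ^ k * ∏ i ∈ range k, (m - i) := by
        rw [prod_mul_distrib, prod_const, card_range]
  rcases le_or_gt (k + i) m with h | h
  · rw [Nat.sub_sub]
    zify [h, (by omega : k ≤ m), (by omega : i ≤ m)]
    nlinarith
  · simp [show m - k - i = 0 by omega]

theorem Nat.pow_mul_choose_sub_le (m k : ℕ) :
    m ^ k * (m - k).choose k ≤ (m - k) ^ k * m.choose k := by
  have h := Nat.pow_mul_descFactorial_sub_le m k
  simp only [Nat.descFactorial_eq_factorial_mul_choose] at h
  refine Nat.le_of_mul_le_mul_left ?_ k.factorial_pos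
  linarith

theorem Real.natCast_sub_div_le_exp (m k : ℕ) :
    ((m - k : ℕ) : ℝ) / m ≤ Real.exp (-k / m) := by
  rcases le_or_gt k m with h | h
  · rw [Nat.cast_sub h, sub_div, neg_div]
    rcases eq_or_ne (m : ℝ) 0 with hm | hm
    · simp [hm]
    · rw [div_self hm]; linarith [Real.add_one_le_exp (-(k / m : ℝ))]
  · simp [Nat.sub_eq_zero_of_le h.le, Real.exp_nonneg]

theorem Nat.choose_sub_le_exp_mul_choose (m k : ℕ) :
    ((m - k).choose k : ℝ) ≤ Real.exp (-(k : ℝ) ^ 2 / m) * m.choose k := by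
  rcases Nat.eq_zero_or_pos m with rfl | hm
  · rcases Nat.eq_zero_or_pos k with rfl | hk
    · simp
    · simp [Nat.choose_eq_zero_of_lt hk]
  have hm' : (0 : ℝ) < (m : ℝ) ^ k := by positivity
  calc ((m - k).choose k : ℝ)
      ≤ (((m - k : ℕ) : ℝ) / m) ^ k * m.choose k := by
        rw [div_pow, div_mul_eq_mul_div, le_div_iff₀ hm', mul_comm]
        exact_mod_cast Nat.pow_mul_choose_sub_le m k
    _ ≤ Real.exp (-k / m) ^ k * m.choose k := by
        gcongr
        exact Real.natCast_sub_div_le_exp m k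
    _ = Real.exp (-(k : ℝ) ^ 2 / m) * m.choose k := by
        rw [← Real.exp_nat_mul]; ring_nf

section

variable {G : Type*} [Group G] [Fintype G] [DecidableEq G]

theorem card_powersetCard_filter_not_exists_mul_eq_le (A : Finset G) (g : G) (k : ℕ) :
    #{B ∈ univ.powersetCard k | ¬ ∃ a ∈ A, ∃ b ∈ B, a * b = g}
      ≤ (Fintype.card G - #A).choose k := by
  set S := (A.image fun a => a⁻¹ * g)ᶜ
  have hS : #S = Fintype.card G - #A := by
    rw [card_compl, card_image_of_injective A fun a b h => by simpa using h]
  calc _ ≤ #(S.powersetCard k) := by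
        refine card_le_card fun B hB => ?_
        simp only [mem_filter, mem_powersetCard] at hB ⊢
        refine ⟨fun b hb => ?_, hB.1.2⟩
        simp only [S, mem_compl, mem_image, not_exists, not_and]
        rintro a ha rfl
        exact hB.2 ⟨a, ha, _, hb, mul_inv_cancel_left a g⟩
    _ = _ := by rw [card_powersetCard, hS]

theorem card_pairs_powersetCard_not_exists_mul_eq_le (g : G) (k : ℕ) :
    #{p ∈ univ.powersetCard k ×ˢ univ.powersetCard k | ¬ ∃ a ∈ p.1, ∃ b ∈ p.2, a * b = g}
      ≤ (Fintype.card G).choose k * (Fintype.card G - k).choose k := by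
  rw [card_filter, sum_product]
  calc _ ≤ ∑ A ∈ univ.powersetCard k, (Fintype.card G - k).choose k := by
        refine sum_le_sum fun A hA => ?_
        have h := card_powersetCard_filter_not_exists_mul_eq_le A g k
        rwa [(mem_powersetCard.mp hA).2, card_filter] at h
    _ = _ := by rw [sum_const, card_powersetCard, card_univ, smul_eq_mul]

end

theorem stmt0_general {G : Type*} [Group G] [Fintype G] [DecidableEq G]
    (m k : ℕ) (hm : Fintype.card G = m) (g : G) :
    ((((Finset.univ.powersetCard k) ×ˢ (Finset.univ.powersetCard k)).filter
      (fun p : Finset G × Finset G => ¬ ∃ a ∈ p.1, ∃ b ∈ p.2, a * b = g)).card : ℝ) ≤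
      Real.exp (-((k : ℝ) ^ 2) / m) * (m.choose k) ^ 2 := by
  subst hm
  calc _ ≤ ((Fintype.card G).choose k * (Fintype.card G - k).choose k : ℝ) := by
        exact_mod_cast card_pairs_powersetCard_not_exists_mul_eq_le g k
    _ ≤ (Fintype.card G).choose k *
          (Real.exp (-(k : ℝ) ^ 2 / Fintype.card G) * (Fintype.card G).choose k) := by
        gcongr
        exact Nat.choose_sub_le_exp_mul_choose _ k
    _ = _ := by ring

/-- Picking `k`-element subsets `A`, `B` of a finite group `G` of order `m`
(with `1 ≤ k ≤ m`), the number of pairs `(A, B)` for which a fixed `g ∈ G` is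
not a product `a * b` with `a ∈ A`, `b ∈ B` is at most `e^{-k²/m} · C(m,k)²`. -/
theorem stmt0 {G : Type*} [Group G] [Fintype G] [DecidableEq G]
    (m k : ℕ) (hm : Fintype.card G = m) (g : G) (hk1 : 1 ≤ k) (hkm : k ≤ m) :
    ((((Finset.univ.powersetCard k) ×ˢ (Finset.univ.powersetCard k)).filter
      (fun p : Finset G × Finset G => ¬ ∃ a ∈ p.1, ∃ b ∈ p.2, a * b = g)).card : ℝ) ≤
      Real.exp (-((k : ℝ) ^ 2) / m) * (m.choose k) ^ 2 :=
  stmt0_general m k hm g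
end

section
/- There exists a constant C > 0 such that for every integer n ≥ 2, the unique real x ≥ 1 solving x! = √(n!) satisfies n/2 ≤ x ≤ (n/2)(1 + C/log n). In particular, x = (n/2)(1 + O(1/log n)) as n → ∞. -/
/-!
Log-convexity of `Γ` gives `Γ(n/2 + 1) ≤ √(Γ(1) Γ(n + 1)) = √(n!)`, and `Γ` is increasing on
`[2, ∞)`, so `x ≥ n/2`. For the upper bound, write `h = ⌊n/2⌋` and `m = h + k`. Then
`n! = C(n, m) m! (n - m)! ≤ 2ⁿ m! h!` and `h! (h + 1)ᵏ ≤ m!`, so `n! ≤ (m!)²` as soon as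
`2ⁿ ≤ (h + 1)ᵏ`. Since `log (h + 1) ≥ log n / 2`, the choice `k = ⌊5n / log n⌋` suffices,
and `m ≤ n/2 + 5n / log n`, hence `x ≤ m ≤ (n/2)(1 + 10 / log n)`.
-/

open Real
open scoped Nat

namespace Real

theorem Gamma_midpoint_le_sqrt {s t : ℝ} (hs : 0 < s) (ht : 0 < t) :
    Gamma ((s + t) / 2) ≤ √(Gamma s * Gamma t) := by
  have h := Gamma_mul_add_mul_le_rpow_Gamma_mul_rpow_Gamma hs ht (a := 1 / 2) (b := 1 / 2)
    one_half_pos one_half_pos (by norm_num)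
  rw [← mul_rpow (Gamma_pos_of_pos hs).le (Gamma_pos_of_pos ht).le, ← sqrt_eq_rpow] at h
  convert h using 2
  ring

theorem Gamma_half_nat_add_one_le_sqrt_factorial (n : ℕ) :
    Gamma ((n : ℝ) / 2 + 1) ≤ √(n ! : ℝ) := by
  have h := Gamma_midpoint_le_sqrt one_pos (by positivity : (0 : ℝ) < n + 1)
  rwa [Gamma_one, one_mul, Gamma_nat_eq_factorial, add_comm (1 : ℝ), add_assoc, one_add_one_eq_two,
    add_div, div_self two_ne_zero] at h

theorem le_of_Gamma_add_one_le {x y : ℝ} (hy : 1 ≤ y) (h : Gamma (x + 1) ≤ Gamma (y + 1)) :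
    x ≤ y := by
  by_contra! hyx
  have := Gamma_strictMonoOn_Ici (by simp; linarith : y + 1 ∈ Set.Ici (2 : ℝ))
    (by simp; linarith : x + 1 ∈ Set.Ici (2 : ℝ)) (by linarith)
  linarith

end Real

namespace Nat

theorem factorial_le_two_pow_mul {m n : ℕ} (hmn : m ≤ n) : n ! ≤ 2 ^ n * (m ! * (n - m)!) := by
  rw [← choose_mul_factorial_mul_factorial hmn, mul_assoc]
  exact Nat.mul_le_mul_right _ (choose_le_two_pow n m)

theorem factorial_le_factorial_add_sq {n h k : ℕ} (hn : n ≤ 2 * h + 1)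
    (hpow : 2 ^ n ≤ (h + 1) ^ k) : n ! ≤ (h + k)! ^ 2 := by
  rcases le_or_gt n (h + k) with hle | hlt
  · exact (factorial_le hle).trans (Nat.le_self_pow two_ne_zero _)
  have hk : k ≠ 0 := by
    rintro rfl
    rw [pow_zero] at hpow
    have : 2 ^ 1 ≤ 2 ^ n := Nat.pow_le_pow_right two_pos (by omega)
    omega
  calc n ! ≤ 2 ^ n * ((h + k)! * (n - (h + k))!) := factorial_le_two_pow_mul hlt.le
    _ ≤ (h + 1) ^ k * ((h + k)! * h !) := by gcongr; omega
    _ = (h + k)! * (h ! * (h + 1) ^ k) := by ring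
    _ ≤ (h + k)! ^ 2 := by rw [sq]; gcongr; exact factorial_mul_pow_le_factorial

end Nat

theorem two_pow_le_half_add_one_pow_floor {n : ℕ} (hn : 2 ≤ n) :
    2 ^ n ≤ (n / 2 + 1) ^ ⌊5 * n / log n⌋₊ := by
  set L := log n
  set k := ⌊5 * (n : ℝ) / L⌋₊
  have hL : 0 < L := log_pos (by exact_mod_cast hn)
  have hLn : L ≤ n := log_le_self (by positivity)
  rcases le_or_gt L 5 with hL5 | hL5
  · have hnk : n ≤ k := Nat.le_floor (by rw [le_div_iff₀ hL]; nlinarith)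
    calc 2 ^ n ≤ 2 ^ k := Nat.pow_le_pow_right two_pos hnk
      _ ≤ (n / 2 + 1) ^ k := Nat.pow_le_pow_left (by omega) k
  have hk : 5 * (n : ℝ) / L - 1 ≤ k := (Nat.sub_one_lt_floor _).le
  have hlog2 : log 2 < 1 := by linarith [log_two_lt_d9]
  have hhalf : L / 2 ≤ log ((n / 2 : ℕ) + 1 : ℝ) := by
    have hnh : (n : ℝ) / 2 ≤ (n / 2 : ℕ) + 1 := by
      rw [div_le_iff₀ two_pos]
      exact_mod_cast (by omega : n ≤ (n / 2 + 1) * 2)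
    calc L / 2 ≤ L - log 2 := by linarith
      _ = log ((n : ℝ) / 2) := (log_div (by positivity) two_ne_zero).symm
      _ ≤ _ := log_le_log (by positivity) hnh
  have hreal : (2 : ℝ) ^ n ≤ ((n / 2 : ℕ) + 1 : ℝ) ^ k := by
    rw [← log_le_log_iff (by positivity) (by positivity), log_pow, log_pow]
    calc (n : ℝ) * log 2 ≤ 5 * n / 2 - L / 2 := by nlinarith
      _ = (5 * n / L - 1) * (L / 2) := by field_simp
      _ ≤ k * log ((n / 2 : ℕ) + 1 : ℝ) := mul_le_mul hk hhalf (by positivity) (by positivity)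
  exact_mod_cast hreal

/-- There is a constant `C > 0` such that for every `n ≥ 2`, the unique real
`x ≥ 1` with `x! = √(n!)` (where `x! = Γ(x+1)`) satisfies
`n/2 ≤ x ≤ (n/2)(1 + C/log n)`. -/
theorem stmt2 : ∃ C : ℝ, 0 < C ∧ ∀ n : ℕ, 2 ≤ n → ∀ x : ℝ, 1 ≤ x →
    Real.Gamma (x + 1) = Real.sqrt (n.factorial) →
    (n : ℝ) / 2 ≤ x ∧ x ≤ (n : ℝ) / 2 * (1 + C / Real.log n) := by
  refine ⟨10, by norm_num, fun n hn x hx hgx => ⟨?_, ?_⟩⟩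
  · exact le_of_Gamma_add_one_le hx (hgx ▸ Gamma_half_nat_add_one_le_sqrt_factorial n)
  set k := ⌊5 * (n : ℝ) / log n⌋₊
  have hfac : n ! ≤ (n / 2 + k)! ^ 2 :=
    Nat.factorial_le_factorial_add_sq (by omega) (two_pow_le_half_add_one_pow_floor hn)
  have hxm : x ≤ (n / 2 + k : ℕ) := by
    refine le_of_Gamma_add_one_le (by exact_mod_cast (by omega : 1 ≤ n / 2 + k)) ?_
    rw [hgx, Gamma_nat_eq_factorial, sqrt_le_left (by positivity)]
    exact_mod_cast hfac
  have hL : 0 < log n := log_pos (by exact_mod_cast hn)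
  calc x ≤ (n / 2 + k : ℕ) := hxm
    _ ≤ (n : ℝ) / 2 + 5 * n / log n := by
      push_cast
      gcongr
      · exact Nat.cast_div_le
      · exact Nat.floor_le (by positivity)
    _ = (n : ℝ) / 2 * (1 + 10 / log n) := by field_simp; ring
end

section
/- Let x = x(n) be the unique real solution with x ≥ 1 of x! = √(n!) (for n ≥ 2). Then x = (n/2)(1 + (log 2)/(log n) + O((log n)^{-2})); that is, there exist a constant C > 0 and an integer n₀ such that for all n ≥ n₀, |x − (n/2)(1 + (log 2)/(log n))| ≤ C·n/(log n)². -/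
/-!
Write `F y = y log y - y` (`stirlingLead`). Stirling's formula, together with the monotonicity of
`Γ` on `[2, ∞)` to pass from factorials to real arguments, gives `log Γ(y + 1) = F y + O(log y)`,
so the equation `x! = √(n!)` becomes `F x = F n / 2 + O(log n)`. For `t = (n/2)(1 + log 2 / log n)`
the first-order terms of `2 F t - F n` cancel, leaving `O(n / log n)`. Since `F' = log ≥ log n - 2`
near `t`, moving the argument of `F` a distance `d` away from `t` changes `F` by at least
`d (log n - 2)`; with `d = 4n/(log n)²` this exceeds all the errors, so `|x - t| ≤ d`.
-/

open Real Filter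
open scoped Nat

noncomputable def stirlingLead (y : ℝ) : ℝ := y * log y - y

section convexity

variable {y h : ℝ}

theorem stirlingLead_add_mul_log_le (hy : 0 < y) (hh : 0 ≤ h) :
    stirlingLead y + h * log y ≤ stirlingLead (y + h) := by
  have hyh : 0 < y + h := by linarith
  have hlog : 1 - y / (y + h) ≤ log (y + h) - log y := by
    have := one_sub_inv_le_log_of_pos (div_pos hyh hy)
    rwa [inv_div, log_div hyh.ne' hy.ne'] at this
  have hcancel : (y + h) * (1 - y / (y + h)) = h := by field_simp; ring
  unfold stirlingLead
  nlinarith [mul_le_mul_of_nonneg_left hlog hyh.le]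

theorem stirlingLead_add_le_add_mul_log (hy : 0 < y) (hh : 0 ≤ h) :
    stirlingLead (y + h) ≤ stirlingLead y + h * log (y + h) := by
  have hyh : 0 < y + h := by linarith
  have hlog : log (y + h) - log y ≤ h / y := by
    have := log_le_sub_one_of_pos (div_pos hyh hy)
    rwa [log_div hyh.ne' hy.ne', add_div, div_self hy.ne', add_sub_cancel_left] at this
  have hcancel : y * (h / y) = h := by field_simp
  unfold stirlingLead
  nlinarith [mul_le_mul_of_nonneg_left hlog hy.le]

end convexity

theorem stirlingLead_monotoneOn : MonotoneOn stirlingLead (Set.Ici 1) := by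
  intro a (ha : 1 ≤ a) b _ hab
  have := stirlingLead_add_mul_log_le (by linarith : 0 < a) (sub_nonneg.mpr hab)
  rw [add_sub_cancel] at this
  nlinarith [log_nonneg ha]

theorem mul_log_le_abs_stirlingLead_sub {x t d : ℝ} (hx : 1 ≤ x) (htd : 1 ≤ t - d)
    (hd : 0 ≤ d) (hxt : d ≤ |x - t|) : d * log (t - d) ≤ |stirlingLead x - stirlingLead t| := by
  have hlog : log (t - d) ≤ log t := log_le_log (by linarith) (by linarith)
  have hd_log : 0 ≤ d * log (t - d) := mul_nonneg hd (log_nonneg htd)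
  rcases le_abs'.mp hxt with hlt | hgt
  · have hstep := stirlingLead_add_mul_log_le (by linarith : 0 < t - d) hd
    rw [sub_add_cancel] at hstep
    have hmono := stirlingLead_monotoneOn (Set.mem_Ici.mpr hx) (Set.mem_Ici.mpr htd)
      (by linarith : x ≤ t - d)
    rw [abs_sub_comm, le_abs]
    left; linarith
  · have hstep := stirlingLead_add_mul_log_le (by linarith : 0 < t) hd
    have hmono := stirlingLead_monotoneOn (Set.mem_Ici.mpr (by linarith : 1 ≤ t + d))
      (Set.mem_Ici.mpr hx) (by linarith : t + d ≤ x)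
    rw [le_abs]
    left; nlinarith [mul_le_mul_of_nonneg_left hlog hd]

theorem stirlingLead_le_log_factorial {n : ℕ} (hn : n ≠ 0) : stirlingLead n ≤ log n ! := by
  have h1 : (1 : ℝ) ≤ n := by exact_mod_cast Nat.one_le_iff_ne_zero.mpr hn
  have h2π : 0 ≤ log (2 * π) := log_nonneg (by linarith [pi_gt_three])
  have := Stirling.le_log_factorial_stirling hn
  unfold stirlingLead
  linarith [log_nonneg h1]

theorem log_factorial_le_stirlingLead {n : ℕ} (hn : n ≠ 0) :
    log n ! ≤ stirlingLead n + log n / 2 + 1 := by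
  obtain ⟨m, rfl⟩ := Nat.exists_eq_succ_of_ne_zero hn
  have hseq : Stirling.stirlingSeq (m + 1) ≤ exp 1 / √2 :=
    Stirling.stirlingSeq_one ▸ Stirling.stirlingSeq'_antitone (Nat.zero_le m)
  have hlog_seq : log (Stirling.stirlingSeq (m + 1)) ≤ 1 - log 2 / 2 := by
    calc log (Stirling.stirlingSeq (m + 1)) ≤ log (exp 1 / √2) :=
          log_le_log (Stirling.stirlingSeq'_pos m) hseq
      _ = 1 - log 2 / 2 := by rw [log_div (exp_ne_zero 1) (by positivity), log_exp, log_sqrt zero_le_two]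
  have hformula := Stirling.log_stirlingSeq_formula (m + 1)
  have hm : (0 : ℝ) < (m + 1 : ℕ) := by positivity
  rw [log_mul two_ne_zero hm.ne', log_div hm.ne' (exp_ne_zero 1), log_exp] at hformula
  unfold stirlingLead
  push_cast at *
  nlinarith


theorem abs_log_Gamma_add_one_sub_stirlingLead_le {y : ℝ} (hy : 1 ≤ y) :
    |log (Gamma (y + 1)) - stirlingLead y| ≤ 2 * log (y + 1) + 1 := by
  set k := ⌊y⌋₊
  have hk : k ≠ 0 := (Nat.one_le_iff_ne_zero.mp (Nat.le_floor (by exact_mod_cast hy)))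
  have hk1 : (1 : ℝ) ≤ k := by exact_mod_cast Nat.one_le_iff_ne_zero.mpr hk
  have hky : (k : ℝ) ≤ y := Nat.floor_le (by linarith)
  have hyk : y < k + 1 := Nat.lt_floor_add_one y
  have hΓ_mono := Real.Gamma_strictMonoOn_Ici.monotoneOn
  have hΓ_lower : (k ! : ℝ) ≤ Gamma (y + 1) := by
    rw [← Gamma_nat_eq_factorial]
    exact hΓ_mono (by simp; linarith) (by simp; linarith) (by linarith)
  have hΓ_upper : Gamma (y + 1) ≤ ((k + 1) ! : ℝ) := by
    rw [← Gamma_nat_eq_factorial]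
    exact hΓ_mono (by simp; linarith) (by simp; linarith) (by push_cast; linarith)
  have hlog_y : 0 ≤ log y := log_nonneg hy
  have hlog_y1 : log y ≤ log (y + 1) := log_le_log (by linarith) (by linarith)
  have h_lower : stirlingLead y - log y ≤ log (Gamma (y + 1)) := by
    have hstep := stirlingLead_add_le_add_mul_log (by linarith : (0 : ℝ) < k)
      (sub_nonneg.mpr hky)
    rw [add_sub_cancel] at hstep
    have := stirlingLead_le_log_factorial hk
    have := log_le_log (by positivity) hΓ_lower
    nlinarith
  have h_upper : log (Gamma (y + 1)) ≤ stirlingLead y + 2 * log (y + 1) + 1 := by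
    have hfac := log_factorial_le_stirlingLead (Nat.succ_ne_zero k)
    have hΓ := log_le_log (Gamma_pos_of_pos (by linarith)) hΓ_upper
    have hlog_k : log ((k + 1 : ℕ) : ℝ) ≤ log (y + 1) :=
      log_le_log (by positivity) (by push_cast; linarith)
    have hmono := stirlingLead_monotoneOn (Set.mem_Ici.mpr (by push_cast; linarith))
      (Set.mem_Ici.mpr (by linarith)) (by push_cast; linarith : ((k + 1 : ℕ) : ℝ) ≤ y + 1)
    have hstep := stirlingLead_add_le_add_mul_log (by linarith : 0 < y) zero_le_one
    linarith
  rw [abs_le]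
  constructor <;> linarith

theorem abs_two_mul_stirlingLead_sub_le {N : ℝ} (hN : 0 < N) (hL : 1 ≤ log N) :
    |2 * stirlingLead (N / 2 * (1 + log 2 / log N)) - stirlingLead N| ≤ 2 * N / log N := by
  set L := log N with hL_def
  set a := log 2 / L
  have hlog2 : 0 < log 2 := log_pos one_lt_two
  have hlog2_le : log 2 ≤ 1 := by linarith [log_le_sub_one_of_pos (zero_lt_two' ℝ)]
  have haL : a * L = log 2 := div_mul_cancel₀ _ (by positivity)
  have ha : 0 < a := by positivity
  have ha_le : a ≤ 1 := (div_le_one (by positivity)).mpr (by linarith)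
  have hlog_a : 0 ≤ log (1 + a) := log_nonneg (by linarith)
  have hlog_a_le : log (1 + a) ≤ a := by linarith [log_le_sub_one_of_pos (by linarith : 0 < 1 + a)]
  have hlog_t : log (N / 2 * (1 + a)) = L + log (1 + a) - log 2 := by
    rw [log_mul (by positivity) (by positivity), log_div hN.ne' two_ne_zero]
    ring
  have hidentity : 2 * stirlingLead (N / 2 * (1 + a)) - stirlingLead N
      = N * ((1 + a) * log (1 + a) - a * (1 + log 2)) := by
    unfold stirlingLead
    rw [hlog_t, ← hL_def]
    linear_combination N * haL
  have hB : |(1 + a) * log (1 + a) - a * (1 + log 2)| ≤ 2 * a :=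
    abs_le.mpr ⟨by nlinarith, by nlinarith⟩
  have hNa : N * a ≤ N / L := by
    rw [le_div_iff₀ (by positivity), mul_assoc, haL]
    nlinarith
  calc |2 * stirlingLead (N / 2 * (1 + a)) - stirlingLead N|
      = N * |(1 + a) * log (1 + a) - a * (1 + log 2)| := by rw [hidentity, abs_mul, abs_of_pos hN]
    _ ≤ N * (2 * a) := mul_le_mul_of_nonneg_left hB hN.le
    _ ≤ 2 * N / L := by rw [mul_div_assoc]; linarith

theorem abs_sub_le_of_abs_stirlingLead_sub_le {N x : ℝ} (hL : 8 ≤ log N) (hN : log N ^ 3 ≤ N)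
    (hx : 1 ≤ x) (h : |stirlingLead x - stirlingLead N / 2| ≤ 3 * log N + 4) :
    |x - N / 2 * (1 + log 2 / log N)| ≤ 4 * N / log N ^ 2 := by
  have hN0 : 0 < N := lt_of_lt_of_le (by positivity) hN
  have hmid := abs_two_mul_stirlingLead_sub_le hN0 (by linarith)
  set L := log N with hL_def
  set t := N / 2 * (1 + log 2 / L)
  set q := N / L
  have hL0 : 0 < L := by linarith
  have hq : L ^ 2 ≤ q := by rw [le_div_iff₀ hL0]; nlinarith
  have hd : 4 * N / L ^ 2 = 4 * q / L := by simp only [q]; ring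
  have ht : N / 2 ≤ t := le_mul_of_one_le_right (by positivity) (by simp; positivity)
  have hd_le : 4 * q / L ≤ N / 16 := by
    rw [← hd, div_le_div_iff₀ (by positivity) (by norm_num)]
    nlinarith [mul_le_mul_of_nonneg_left (show 64 ≤ L ^ 2 by nlinarith) hN0.le]
  have hN3 : 3 ≤ N := by nlinarith
  have hlog_td : L - 2 ≤ log (t - 4 * q / L) := by
    have hlog3 : log 3 ≤ 2 := by linarith [log_le_sub_one_of_pos (by norm_num : (0 : ℝ) < 3)]
    have := log_le_log (by positivity) (by linarith : N / 3 ≤ t - 4 * q / L)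
    rw [log_div hN0.ne' (by norm_num)] at this
    linarith
  have hupper : |stirlingLead x - stirlingLead t| ≤ 3 * L + 4 + q := by
    calc |stirlingLead x - stirlingLead t|
        ≤ |stirlingLead x - stirlingLead N / 2| + |stirlingLead N / 2 - stirlingLead t| :=
          abs_sub_le _ _ _
      _ = |stirlingLead x - stirlingLead N / 2| + |2 * stirlingLead t - stirlingLead N| / 2 := by
          rw [abs_sub_comm (stirlingLead N / 2), ← abs_two, ← abs_div]
          ring_nf
      _ ≤ 3 * L + 4 + q := by
          have : 2 * N / L = 2 * q := by simp only [q]; ring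
          linarith
  rw [hd]
  by_contra! hfar
  have hlower := mul_log_le_abs_stirlingLead_sub hx (by linarith) (by positivity) hfar.le
  have hgain : 3 * q ≤ 4 * q / L * (L - 2) := by
    rw [div_mul_eq_mul_div, le_div_iff₀ hL0]; nlinarith
  nlinarith [mul_le_mul_of_nonneg_left hlog_td (by positivity : (0 : ℝ) ≤ 4 * q / L)]

theorem le_of_Gamma_add_one_eq_sqrt_factorial {n : ℕ} (hn : n ≠ 0) {x : ℝ}
    (h : Gamma (x + 1) = √(n ! : ℝ)) : x ≤ n := by
  by_contra! hlt
  have hn1 : (1 : ℝ) ≤ n := by exact_mod_cast Nat.one_le_iff_ne_zero.mpr hn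
  have hΓ : Gamma (n + 1) < Gamma (x + 1) :=
    Real.Gamma_strictMonoOn_Ici (by simp; linarith) (by simp; linarith) (by linarith)
  have hsqrt : √(n ! : ℝ) ≤ n ! :=
    Real.sqrt_le_self_iff.mpr (Or.inr (by exact_mod_cast n.factorial_pos))
  rw [Gamma_nat_eq_factorial, h] at hΓ
  linarith

theorem abs_stirlingLead_sub_half_le_of_Gamma_eq {n : ℕ} (hn : n ≠ 0) {x : ℝ} (hx : 1 ≤ x)
    (h : Gamma (x + 1) = √(n ! : ℝ)) :
    |stirlingLead x - stirlingLead n / 2| ≤ 3 * log n + 4 := by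
  have hn0 : (0 : ℝ) < n := by positivity
  have hlog_n : 0 ≤ log n := log_nonneg (by exact_mod_cast Nat.one_le_iff_ne_zero.mpr hn)
  have hxn := le_of_Gamma_add_one_eq_sqrt_factorial hn h
  have hlog_Gamma : log (Gamma (x + 1)) = log n ! / 2 := by rw [h, log_sqrt (by positivity)]
  have hGamma := abs_log_Gamma_add_one_sub_stirlingLead_le hx
  rw [hlog_Gamma, abs_le] at hGamma
  have hlog_x : log (x + 1) ≤ log 2 + log n := by
    rw [← log_mul two_ne_zero hn0.ne']
    exact log_le_log (by linarith) (by linarith)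
  have hlog2 : log 2 ≤ 1 := by linarith [log_le_sub_one_of_pos (zero_lt_two' ℝ)]
  have hfac_lower := stirlingLead_le_log_factorial hn
  have hfac_upper := log_factorial_le_stirlingLead hn
  rw [abs_le]
  constructor <;> linarith

theorem eventually_log_bounds : ∀ᶠ N : ℝ in atTop, 8 ≤ log N ∧ log N ^ 3 ≤ N := by
  refine (tendsto_log_atTop.eventually_ge_atTop 8).and ?_
  filter_upwards [(isLittleO_pow_log_id_atTop (n := 3)).eventuallyLE,
    eventually_ge_atTop 0] with N hN hN0
  simpa [abs_of_nonneg hN0] using (le_abs_self _).trans hN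

/-- Let `x = x(n)` be the unique real solution `x ≥ 1` of `x! = √(n!)` (with
`x! = Γ(x+1)`). Then `x = (n/2)(1 + (log 2)/(log n) + O((log n)⁻²))`: there are
`C > 0` and `n₀` such that for all `n ≥ n₀`,
`|x − (n/2)(1 + (log 2)/(log n))| ≤ C·n/(log n)²`. -/
theorem stmt3 : ∃ C : ℝ, 0 < C ∧ ∃ n₀ : ℕ, ∀ n : ℕ, n₀ ≤ n → ∀ x : ℝ, 1 ≤ x →
    Real.Gamma (x + 1) = Real.sqrt (n.factorial) →
    |x - (n : ℝ) / 2 * (1 + Real.log 2 / Real.log n)| ≤ C * n / (Real.log n) ^ 2 := by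
  obtain ⟨n₀, hn₀⟩ := eventually_atTop.mp (tendsto_natCast_atTop_atTop.eventually eventually_log_bounds)
  refine ⟨4, by norm_num, n₀, fun n hn x hx hΓ => ?_⟩
  obtain ⟨hlog, hlog_cube⟩ := hn₀ n hn
  have hn0 : n ≠ 0 := by rintro rfl; norm_num at hlog
  exact abs_sub_le_of_abs_stirlingLead_sub_le hlog hlog_cube hx
    (abs_stirlingLead_sub_half_le_of_Gamma_eq hn0 hx hΓ)
end

section
/- There exists a constant C > 0 such that for every integer n ≥ 2 there are subsets A, B of the symmetric group S_n with AB = S_n (every permutation in S_n is a product ab with a ∈ A, b ∈ B), |A|·|B| = n!, and max(|A|, |B|) ≤ C · n^{1/2} · √(n!). (The sets may be taken as A = a set of n·(n−1)·…·(n−k+1) permutations realizing all possible images of (1, …, k), and B = the subgroup of permutations fixing 1, …, k pointwise, for a suitable choice of k.) -/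
/-!
Take `B` to be a subgroup of `Sₙ` isomorphic to `Sₘ` and `A` a left transversal of it, so
`|A| = n!/m!` and `|B| = m!`. Choosing `m` largest with `(m!)² ≤ n · n!` balances the two:
if `m < n` then `((m+1)!)² > n · n!`, and since `(m+1)! ≤ n · m!` this forces `(n!/m!)² < n · n!`.
-/

open Equiv Nat

theorem Subgroup.exists_finset_factorization {G : Type*} [Group G] [Finite G] (H : Subgroup G) :
    ∃ A B : Finset G, (∀ g : G, ∃ a ∈ A, ∃ b ∈ B, a * b = g) ∧
      A.card * B.card = Nat.card G ∧ B.card = Nat.card H := by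
  obtain ⟨S, hS, -⟩ := H.exists_isComplement_left 1
  refine ⟨S.toFinite.toFinset, (H : Set G).toFinite.toFinset, fun g => ?_, ?_, ?_⟩
  · obtain ⟨⟨a, b⟩, hab⟩ := hS.2 g
    exact ⟨a, by simp, b, by simp, hab⟩
  · rw [← Nat.card_eq_card_finite_toFinset, ← Nat.card_eq_card_finite_toFinset]
    exact hS.card_mul_card
  · rw [← Nat.card_eq_card_finite_toFinset]
    rfl

theorem Equiv.Perm.exists_subgroup_card_eq_factorial {m n : ℕ} (hmn : m ≤ n) :
    ∃ H : Subgroup (Perm (Fin n)), Nat.card H = m ! := by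
  refine ⟨(⊤ : Subgroup (Perm (Fin m))).map (Perm.viaEmbeddingHom (Fin.castLEEmb hmn)), ?_⟩
  rw [Subgroup.card_map_of_injective (Perm.viaEmbeddingHom_injective _), Subgroup.card_top,
    Nat.card_perm, Nat.card_eq_fintype_card, Fintype.card_fin]

theorem Nat.factorial_div_sq_lt {m n : ℕ} (hmn : m < n) (h : n * n ! < (m + 1)! ^ 2) :
    (n ! / m !) ^ 2 < n * n ! := by
  obtain ⟨c, hc⟩ := factorial_dvd_factorial hmn.le
  rw [show n ! / m ! = c by rw [hc, Nat.mul_div_cancel_left _ (factorial_pos m)]]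
  suffices c ^ 2 * (n * n !) < (n * n !) * (n * n !) from Nat.lt_of_mul_lt_mul_right this
  calc c ^ 2 * (n * n !) < c ^ 2 * (m + 1)! ^ 2 :=
        Nat.mul_lt_mul_of_pos_left h (pow_pos (Nat.pos_of_mul_pos_left (hc ▸ factorial_pos n)) 2)
    _ = (n ! * (m + 1)) ^ 2 := by rw [hc, factorial_succ]; ring
    _ ≤ (n ! * n) ^ 2 := by gcongr; omega
    _ = (n * n !) * (n * n !) := by ring

theorem Nat.exists_factorial_sq_le_and_factorial_div_sq_le {n : ℕ} (hn : 1 ≤ n) :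
    ∃ m ≤ n, m ! ^ 2 ≤ n * n ! ∧ (n ! / m !) ^ 2 ≤ n * n ! := by
  have hpos : 1 ≤ n * n ! := Nat.mul_pos hn (factorial_pos n)
  let P : ℕ → Prop := fun m => (m ! ^ 2 ≤ n * n !)
  have hP0 : P 0 := by simpa only [P, factorial_zero, one_pow] using hpos
  refine ⟨Nat.findGreatest P n, Nat.findGreatest_le n, Nat.findGreatest_spec (zero_le n) hP0, ?_⟩
  rcases (Nat.findGreatest_le (P := P) n).lt_or_eq with hlt | heq
  · have hnext : ¬ P (Nat.findGreatest P n + 1) :=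
      Nat.findGreatest_is_greatest (Nat.lt_succ_self _) hlt
    exact (factorial_div_sq_lt hlt (not_le.mp hnext)).le
  · rwa [heq, Nat.div_self (factorial_pos n), one_pow]

/-- There is a constant `C > 0` such that for every `n ≥ 2` there are subsets
`A, B` of the symmetric group `Sₙ` with `AB = Sₙ`, `|A|·|B| = n!`, and
`max(|A|, |B|) ≤ C · n^(1/2) · √(n!)`. -/
theorem stmt6 : ∃ C : ℝ, 0 < C ∧ ∀ n : ℕ, 2 ≤ n →
    ∃ A B : Finset (Equiv.Perm (Fin n)),
      (∀ g : Equiv.Perm (Fin n), ∃ a ∈ A, ∃ b ∈ B, a * b = g) ∧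
      A.card * B.card = n.factorial ∧
      ((max A.card B.card : ℕ) : ℝ) ≤ C * Real.sqrt n * Real.sqrt n.factorial := by
  refine ⟨1, one_pos, fun n hn => ?_⟩
  obtain ⟨m, hmn, hB_sq, hA_sq⟩ := exists_factorial_sq_le_and_factorial_div_sq_le (n := n) (by omega)
  obtain ⟨H, hH⟩ := Perm.exists_subgroup_card_eq_factorial hmn
  obtain ⟨A, B, hAB, hcard, hB⟩ := H.exists_finset_factorization
  rw [Nat.card_perm, Nat.card_eq_fintype_card, Fintype.card_fin] at hcard
  have hA : A.card = n ! / m ! := by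
    rw [← hcard, hB, hH, Nat.mul_div_cancel _ (factorial_pos m)]
  have bound (x : ℕ) (hx : x ^ 2 ≤ n * n !) : (x : ℝ) ≤ 1 * √n * √(n ! : ℕ) := by
    rw [one_mul, ← Real.sqrt_mul (cast_nonneg n)]
    exact (le_abs_self _).trans (Real.abs_le_sqrt (by exact_mod_cast hx))
  refine ⟨A, B, hAB, hcard, ?_⟩
  rcases max_choice A.card B.card with h | h <;> rw [h]
  · exact bound _ (hA ▸ hA_sq)
  · exact bound _ (hB ▸ hH ▸ hB_sq)
end

section
/- Let n ≥ 2 and let m be an integer with 1 ≤ m < n!. Let x be the largest integer such that x! ≤ m (so x! ≤ m < (x+1)! and x < n). Set α = max(√2, √((x+1)/(n−x))). Then there exists a subgroup H of S_n with m/α ≤ |H| ≤ α·m. (Such an H can be taken of the form generated by the copy of S_k on {1,…,k} and an ℓ-cycle on {k+1,…,k+ℓ}, with k + ℓ ≤ n.) -/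
/-!
Subgroups `S_k × C_l` of `Sₙ`, with `C_l` generated by an `l`-cycle on points outside `{1, …, k}`,
realise every order `k! * l` with `l ≥ 1` and `k + l ≤ n`. With `q = ⌊m / x!⌋` we have
`x! q ≤ m < x! (q + 1)`; if `x + q + 1 ≤ n` both bounds are realised and their ratio is at most `2`.
Otherwise `n - x ≤ q`, and `x! (n - x) ≤ m < (x + 1)!` are realised with ratio `(x + 1) / (n - x)`.
If `c₁ ≤ m ≤ c₂` with `c₂ ≤ α² c₁`, the bound on the same side of `√(c₁ c₂)` as `m` is within a
factor `α` of `m`.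
-/

open Equiv Nat

section Realisable

variable {α : Type*} [Fintype α]

lemma exists_subgroup_card_eq_factorial {k : ℕ} (h : k ≤ Fintype.card α) :
    ∃ H : Subgroup (Perm α), Nat.card H = k ! := by
  obtain ⟨e⟩ := Function.Embedding.nonempty_of_card_le (by simpa using h : Fintype.card (Fin k) ≤ _)
  refine ⟨(Perm.viaEmbeddingHom e).range, ?_⟩
  rw [← Nat.card_congr (MonoidHom.ofInjective (Perm.viaEmbeddingHom_injective e)).toEquiv]
  simp [Nat.card_eq_fintype_card, Fintype.card_perm]

lemma exists_subgroup_card_eq_factorial_mul {k l : ℕ} (hl : 0 < l)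
    (h : k + l ≤ Fintype.card α) : ∃ H : Subgroup (Perm α), Nat.card H = k ! * l := by
  have : NeZero l := ⟨hl.ne'⟩
  obtain ⟨e⟩ := Function.Embedding.nonempty_of_card_le
    (by simpa using h : Fintype.card (Fin k ⊕ Multiplicative (ZMod l)) ≤ Fintype.card α)
  let f : Perm (Fin k) × Multiplicative (ZMod l) →* Perm α :=
    (Perm.viaEmbeddingHom e).comp
      ((Perm.sumCongrHom _ _).comp ((MonoidHom.id _).prodMap (MulAction.toPermHom _ _)))
  have hf : Function.Injective f :=
    (Perm.viaEmbeddingHom_injective e).comp <| Perm.sumCongrHom_injective.comp <|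
      Function.injective_id.prodMap MulAction.toPerm_injective
  refine ⟨f.range, ?_⟩
  rw [← Nat.card_congr (MonoidHom.ofInjective hf).toEquiv, Nat.card_prod]
  simp [Nat.card_eq_fintype_card, Fintype.card_perm]

end Realisable

lemma near_of_le_of_le_of_le_sq_mul {c₁ c₂ m α : ℝ} (hα : 1 ≤ α) (hc₁ : 0 ≤ c₁)
    (h₁ : c₁ ≤ m) (h₂ : m ≤ c₂) (hratio : c₂ ≤ α ^ 2 * c₁) :
    (m ≤ α * c₁ ∧ c₁ ≤ α * m) ∨ (m ≤ α * c₂ ∧ c₂ ≤ α * m) := by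
  rcases le_or_gt (m ^ 2) (c₁ * c₂) with hm | hm
  · refine Or.inl ⟨?_, by nlinarith⟩
    refine le_of_sq_le_sq ?_ (by positivity)
    nlinarith
  · refine Or.inr ⟨by nlinarith, ?_⟩
    refine le_of_sq_le_sq ?_ (by nlinarith)
    nlinarith

lemma le_max_sqrt_sq_right (a : ℝ) {b : ℝ} (hb : 0 ≤ b) : b ≤ max √a √b ^ 2 := by
  simpa [Real.sq_sqrt hb] using pow_le_pow_left₀ (Real.sqrt_nonneg b) (le_max_right √a √b) 2

lemma exists_subgroup_card_near (n m x : ℕ) (hxn : x < n) (hx1 : x ! ≤ m)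
    (hx2 : m < (x + 1)!) {α : ℝ} (hα : 0 ≤ α) (hα2 : 2 ≤ α ^ 2)
    (hαN : (x + 1) / (n - x : ℕ) ≤ α ^ 2) :
    ∃ H : Subgroup (Perm (Fin n)), (m : ℝ) ≤ α * Nat.card H ∧ (Nat.card H : ℝ) ≤ α * m := by
  set N := n - x with hN
  have hα1 : 1 ≤ α := by nlinarith
  have hfac : 0 < x ! := x.factorial_pos
  set q := m / x.factorial
  have hq1 : 1 ≤ q := (Nat.one_le_div_iff hfac).mpr hx1
  have hqm : x ! * q ≤ m := Nat.mul_div_le m _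
  have hmq : m < x ! * (q + 1) := by
    rw [mul_comm]; exact Nat.lt_mul_of_div_lt (Nat.lt_succ_self q) hfac
  have hcard : Fintype.card (Fin n) = x + N := by rw [Fintype.card_fin]; omega
  rcases le_or_gt (q + 1) N with hqN | hNq
  · have hratio : ((x ! * (q + 1) : ℕ) : ℝ) ≤ α ^ 2 * (x ! * q : ℕ) := by
      have : ((x ! * (q + 1) : ℕ) : ℝ) ≤ 2 * (x ! * q : ℕ) := by
        exact_mod_cast (by nlinarith : x ! * (q + 1) ≤ 2 * (x ! * q))
      nlinarith [(by positivity : (0 : ℝ) ≤ (x ! * q : ℕ))]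
    rcases near_of_le_of_le_of_le_sq_mul (m := (m : ℝ)) hα1 (by positivity)
      (by exact_mod_cast hqm) (by exact_mod_cast hmq.le) hratio with h | h
    · obtain ⟨H, hH⟩ :=
        exists_subgroup_card_eq_factorial_mul (α := Fin n) (k := x) hq1 (by omega)
      exact ⟨H, hH ▸ h⟩
    · obtain ⟨H, hH⟩ :=
        exists_subgroup_card_eq_factorial_mul (α := Fin n) (k := x) q.succ_pos (by omega)
      exact ⟨H, hH ▸ h⟩
  · have hNm : x ! * N ≤ m := le_trans (Nat.mul_le_mul_left _ (by omega)) hqm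
    have hratio : (((x + 1)! : ℕ) : ℝ) ≤ α ^ 2 * (x ! * N : ℕ) := by
      have hNpos : (0 : ℝ) < N := by exact_mod_cast (by omega : 0 < N)
      calc (((x + 1)! : ℕ) : ℝ) = (x + 1) / N * (x ! * N : ℕ) := by
            push_cast [Nat.factorial_succ]; field_simp
        _ ≤ α ^ 2 * (x ! * N : ℕ) := by gcongr
    rcases near_of_le_of_le_of_le_sq_mul (m := (m : ℝ)) hα1 (by positivity)
      (by exact_mod_cast hNm) (by exact_mod_cast hx2.le) hratio with h | h
    · obtain ⟨H, hH⟩ :=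
        exists_subgroup_card_eq_factorial_mul (α := Fin n) (by omega : 0 < N) hcard.ge
      exact ⟨H, hH ▸ h⟩
    · obtain ⟨H, hH⟩ := exists_subgroup_card_eq_factorial (α := Fin n) (k := x + 1) (by simpa)
      exact ⟨H, hH ▸ h⟩

theorem stmt10_general (n m x : ℕ) (hm2 : m < n.factorial)
    (hx1 : x.factorial ≤ m) (hx2 : m < (x + 1).factorial) :
    ∃ H : Subgroup (Equiv.Perm (Fin n)),
      (m : ℝ) / max (Real.sqrt 2) (Real.sqrt (((x : ℝ) + 1) / ((n : ℝ) - x))) ≤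
        Nat.card H ∧
      (Nat.card H : ℝ) ≤
        max (Real.sqrt 2) (Real.sqrt (((x : ℝ) + 1) / ((n : ℝ) - x))) * m := by
  have hxn : x < n := by
    by_contra! h
    exact (Nat.factorial_le h).trans hx1 |>.not_gt hm2
  have hα2 : 2 ≤ max √2 √((x + 1) / (n - x : ℕ)) ^ 2 := by
    rw [max_comm]; exact le_max_sqrt_sq_right _ zero_le_two
  obtain ⟨H, hm, hH⟩ := exists_subgroup_card_near n m x hxn hx1 hx2 (by positivity) hα2
    (le_max_sqrt_sq_right 2 (by positivity))
  rw [Nat.cast_sub hxn.le] at hm hH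
  exact ⟨H, div_le_of_le_mul₀ (by positivity) (by positivity) (by linarith), hH⟩

/-- Let `n ≥ 2` and `1 ≤ m < n!`.  Let `x` be the largest integer with
`x! ≤ m` (equivalently, `x! ≤ m < (x+1)!`).  Set
`α = max(√2, √((x+1)/(n−x)))`.  Then `Sₙ` has a subgroup `H` with
`m/α ≤ |H| ≤ α·m`. -/
theorem stmt10 (n m x : ℕ) (hn : 2 ≤ n) (hm1 : 1 ≤ m) (hm2 : m < n.factorial)
    (hx1 : x.factorial ≤ m) (hx2 : m < (x + 1).factorial) :
    ∃ H : Subgroup (Equiv.Perm (Fin n)),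
      (m : ℝ) / max (Real.sqrt 2) (Real.sqrt (((x : ℝ) + 1) / ((n : ℝ) - x))) ≤
        Nat.card H ∧
      (Nat.card H : ℝ) ≤
        max (Real.sqrt 2) (Real.sqrt (((x : ℝ) + 1) / ((n : ℝ) - x))) * m :=
  stmt10_general n m x hm2 hx1 hx2
end

section
/- For every integer n ≥ 7, there exists a subgroup H of the symmetric group S_n whose order satisfies √(n!)/√2 ≤ |H| ≤ √(2·n!). In particular, S_n has a subgroup of order Θ(√(n!)). -/
/-!
Placing `Sₐ` on `a` points and a `2`-subgroup of order `2ʲ` of `S₂ⱼ` on `2j` further points gives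
subgroups of `Sₙ` of every order `a! · 2ʲ` with `a + 2j ≤ n`. Take `a` with
`a!² ≤ 8·n! < (a+1)!²`. If `a!² ≥ 2·n!`, the alternating group `Aₐ` already has the right order.
Otherwise doubling `a!` lands in the window `[√(n!/2), √(2·n!)]` after some `j` with
`2^(j+1) ≤ a`, and the `2j` extra points exist because `a!` beats `8·(2a)^(2j-1)`; that is
proved at `a = 2^(j+1)` by doubling `a`, and then carried to larger `a` one step at a time,
since `(1 + 1/a)^k < 3` for `k ≤ a`.
-/

open Equiv Nat

namespace Nat

theorem two_pow_dvd_factorial_two_mul (j : ℕ) : 2 ^ j ∣ (2 * j)! := by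
  rcases j with _ | i
  · simp
  · have h : 2 * (i + 1) = 2 * i + 1 + 1 := by ring
    rw [h, factorial_eq_mul_doubleFactorial, ← h, doubleFactorial_two_mul]
    exact (dvd_mul_right _ _).mul_right _

theorem exists_factorial_sq_le_lt {M : ℕ} (hM : 0 < M) :
    ∃ a, a ! ^ 2 ≤ M ∧ M < (a + 1)! ^ 2 := by
  have hex : ∃ a, M < (a + 1)! ^ 2 :=
    ⟨M, (lt_add_one M).trans_le ((self_le_factorial _).trans (Nat.le_self_pow two_ne_zero _))⟩
  refine ⟨Nat.find hex, ?_, Nat.find_spec hex⟩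
  rcases h : Nat.find hex with _ | a
  · simpa using Nat.one_le_iff_ne_zero.mpr hM.ne'
  · simpa using Nat.find_min hex (h ▸ lt_add_one a)

theorem exists_mul_two_pow_sq_mem {c N : ℕ} (hc : 0 < c) (h : c ^ 2 < 2 * N) :
    ∃ j, N ≤ 2 * (c * 2 ^ j) ^ 2 ∧ (c * 2 ^ j) ^ 2 < 2 * N := by
  have hex : ∃ j, N ≤ 2 * (c * 2 ^ j) ^ 2 := by
    refine ⟨N, (Nat.lt_two_pow_self).le.trans ?_⟩
    nlinarith [Nat.one_le_two_pow (n := N),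
      Nat.pow_le_pow_left (Nat.le_mul_of_pos_left (2 ^ N) hc) 2]
  refine ⟨Nat.find hex, Nat.find_spec hex, ?_⟩
  rcases hj : Nat.find hex with _ | j
  · simpa using h
  · have := Nat.find_min hex (hj ▸ lt_add_one j)
    have hsq : (c * 2 ^ (j + 1)) ^ 2 = 4 * (c * 2 ^ j) ^ 2 := by ring
    omega

theorem add_one_pow_le_three_mul_pow {a k : ℕ} (hk : k ≤ a) : (a + 1) ^ k ≤ 3 * a ^ k := by
  rcases Nat.eq_zero_or_pos a with rfl | ha
  · simp_all
  have hbound : (1 + (a : ℝ)⁻¹) ^ k ≤ 3 :=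
    calc (1 + (a : ℝ)⁻¹) ^ k ≤ (1 + (a : ℝ)⁻¹) ^ a :=
          pow_le_pow_right₀ (le_add_of_nonneg_right (by positivity)) hk
      _ ≤ Real.exp 1 := Real.one_add_inv_pow_le_exp
      _ ≤ 3 := Real.exp_one_lt_d9.le.trans (by norm_num)
  have hsplit : ((a : ℝ) + 1) ^ k = a ^ k * (1 + (a : ℝ)⁻¹) ^ k := by
    rw [← mul_pow]; field_simp
  have : ((a : ℝ) + 1) ^ k ≤ 3 * a ^ k := by
    rw [hsplit, mul_comm 3]; gcongr
  exact_mod_cast this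

theorem mul_two_mul_pow_lt_factorial_of_le {c k a₀ a : ℕ} (hk : k ≤ a₀) (h2 : 2 ≤ a₀)
    (h₀ : c * (2 * a₀) ^ k < a₀ !) (ha : a₀ ≤ a) : c * (2 * a) ^ k < a ! := by
  induction a, ha using Nat.le_induction with
  | base => exact h₀
  | succ a ha ih =>
    calc c * (2 * (a + 1)) ^ k = c * 2 ^ k * (a + 1) ^ k := by rw [mul_pow, mul_assoc]
      _ ≤ c * 2 ^ k * (3 * a ^ k) := by gcongr; exact add_one_pow_le_three_mul_pow (hk.trans ha)
      _ ≤ (a + 1) * (c * (2 * a) ^ k) := by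
          rw [mul_pow]; nlinarith [Nat.zero_le (c * 2 ^ k * a ^ k)]
      _ < (a + 1) * a ! := by gcongr
      _ = (a + 1)! := (factorial_succ a).symm

theorem eight_mul_pow_lt_factorial_two_pow {i : ℕ} (hi : 1 ≤ i) :
    8 * (2 * 2 ^ (i + 2)) ^ (2 * i + 1) < (2 ^ (i + 2))! := by
  have hpow (i : ℕ) : 8 * (2 * 2 ^ (i + 2)) ^ (2 * i + 1) = 2 ^ ((i + 3) * (2 * i + 1) + 3) := by
    rw [← pow_succ', ← pow_mul, pow_add, mul_comm]; rfl
  induction i, hi using Nat.le_induction with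
  | base => decide
  | succ i hi ih =>
    have hdouble : (2 ^ (i + 2))! * (2 ^ (i + 2)) ^ 2 ^ (i + 2) ≤ (2 ^ (i + 3))! := by
      have := factorial_mul_pow_sub_le_factorial (n := 2 ^ (i + 2)) (m := 2 ^ (i + 2) + 2 ^ (i + 2))
        (Nat.le_add_right _ _)
      rwa [Nat.add_sub_cancel, ← two_mul, ← pow_succ'] at this
    have h8 : 8 ≤ 2 ^ (i + 2) := by
      calc 8 = 2 ^ 3 := rfl
        _ ≤ 2 ^ (i + 2) := Nat.pow_le_pow_right two_pos (by omega)
    rw [hpow] at ih ⊢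
    calc 2 ^ ((i + 1 + 3) * (2 * (i + 1) + 1) + 3)
        ≤ 2 ^ ((i + 3) * (2 * i + 1) + 3 + (i + 2) * 2 ^ (i + 2)) :=
          Nat.pow_le_pow_right two_pos (by nlinarith)
      _ = 2 ^ ((i + 3) * (2 * i + 1) + 3) * (2 ^ (i + 2)) ^ 2 ^ (i + 2) := by
          rw [pow_add, pow_mul]
      _ < (2 ^ (i + 2))! * (2 ^ (i + 2)) ^ 2 ^ (i + 2) := by gcongr
      _ ≤ (2 ^ (i + 3))! := hdouble

theorem eight_mul_pow_lt_factorial {a i : ℕ} (ha : 5 ≤ a) (hi : 2 ^ (i + 2) ≤ a) :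
    8 * (2 * a) ^ (2 * i + 1) < a ! := by
  rcases Nat.eq_zero_or_pos i with rfl | hi1
  -- the doubling base fails at `i = 0` (`8 * 8 > 4!`), hence the start at `a = 5`
  · exact mul_two_mul_pow_lt_factorial_of_le (a₀ := 5) (by norm_num) (by norm_num) (by decide) ha
  · refine mul_two_mul_pow_lt_factorial_of_le ?_ ?_ (eight_mul_pow_lt_factorial_two_pow hi1) hi
    · have := Nat.lt_two_pow_self (n := i); rw [pow_add]; omega
    · exact le_trans (by norm_num) (Nat.pow_le_pow_right two_pos (by omega : 1 ≤ i + 2))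

theorem add_two_mul_add_two_le_of_factorial_sq_le {n a i : ℕ} (ha : 5 ≤ a)
    (hi : 2 ^ (i + 2) ≤ a) (h : a ! ^ 2 ≤ 8 * n !) : a + 2 * i + 2 ≤ n := by
  by_contra! hn
  have hk : 2 * i + 1 ≤ a := by
    have := Nat.lt_two_pow_self (n := i); rw [pow_add] at hi; omega
  have hfact : n ! ≤ a ! * (2 * a) ^ (2 * i + 1) :=
    calc n ! ≤ (a + (2 * i + 1))! := factorial_le (by omega)
      _ = a ! * (a + 1).ascFactorial (2 * i + 1) := (factorial_mul_ascFactorial a _).symm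
      _ ≤ a ! * (2 * a) ^ (2 * i + 1) := by
          gcongr
          exact (ascFactorial_le_pow_add a _).trans (Nat.pow_le_pow_left (by omega) _)
  have := eight_mul_pow_lt_factorial ha hi
  nlinarith [factorial_pos a]

end Nat

section PermSubgroups

variable {α β : Type*}

theorem Equiv.Perm.exists_subgroup_card_eq_of_embedding (ι : α ↪ β) (K : Subgroup (Perm α)) :
    ∃ H : Subgroup (Perm β), Nat.card H = Nat.card K :=
  ⟨K.map (Perm.viaEmbeddingHom ι),
    Subgroup.card_map_of_injective (Perm.viaEmbeddingHom_injective ι)⟩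

theorem Equiv.Perm.exists_subgroup_card_eq_mul (K : Subgroup (Perm α)) (L : Subgroup (Perm β)) :
    ∃ H : Subgroup (Perm (α ⊕ β)), Nat.card H = Nat.card K * Nat.card L := by
  refine ⟨(K.prod L).map (Perm.sumCongrHom α β), ?_⟩
  rw [Subgroup.card_map_of_injective Perm.sumCongrHom_injective, ← Nat.card_prod]
  exact Nat.card_congr (Subgroup.prodEquiv K L).toEquiv

end PermSubgroups

theorem exists_perm_subgroup_card_eq_factorial_mul_two_pow {n a j : ℕ} (h : a + 2 * j ≤ n) :
    ∃ H : Subgroup (Perm (Fin n)), Nat.card H = a ! * 2 ^ j := by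
  have : Fact (Nat.Prime 2) := ⟨Nat.prime_two⟩
  obtain ⟨P, hP⟩ := Sylow.exists_subgroup_card_pow_prime (G := Perm (Fin (2 * j))) 2 (n := j)
    (by rw [Nat.card_perm, Nat.card_fin]; exact two_pow_dvd_factorial_two_mul j)
  obtain ⟨K, hK⟩ := Perm.exists_subgroup_card_eq_mul (⊤ : Subgroup (Perm (Fin a))) P
  obtain ⟨H, hH⟩ := Perm.exists_subgroup_card_eq_of_embedding
    (finSumFinEquiv.toEmbedding.trans (Fin.castLEEmb h)) K
  refine ⟨H, ?_⟩
  rw [hH, hK, hP, Subgroup.card_top, Nat.card_perm, Nat.card_fin]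

theorem exists_perm_subgroup_two_mul_card_eq_factorial {n a : ℕ} (ha : 2 ≤ a) (h : a ≤ n) :
    ∃ H : Subgroup (Perm (Fin n)), 2 * Nat.card H = a ! := by
  have : Nontrivial (Fin a) := Fin.nontrivial_iff_two_le.mpr ha
  obtain ⟨H, hH⟩ := Perm.exists_subgroup_card_eq_of_embedding (Fin.castLEEmb h)
    (alternatingGroup (Fin a))
  refine ⟨H, ?_⟩
  rw [hH, Nat.card_eq_fintype_card, two_mul_card_alternatingGroup, Fintype.card_perm,
    Fintype.card_fin]

theorem exists_perm_subgroup_card_sq_mem {n : ℕ} (hn : 7 ≤ n) :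
    ∃ H : Subgroup (Perm (Fin n)), n ! ≤ 2 * Nat.card H ^ 2 ∧ Nat.card H ^ 2 ≤ 2 * n ! := by
  obtain ⟨a, ha, ha'⟩ := exists_factorial_sq_le_lt (M := 8 * n !) (by positivity)
  have ha5 : 5 ≤ a := by
    by_contra! h
    have : (a + 1)! ^ 2 ≤ 8 * n ! :=
      calc (a + 1)! ^ 2 ≤ 5 ! ^ 2 := by gcongr; omega
        _ ≤ 8 * 7 ! := by decide
        _ ≤ 8 * n ! := by gcongr
    omega
  have han : a ≤ n := by
    have : 8 * n ! < (n + 1)! ^ 2 :=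
      calc 8 * n ! < 8 ^ 2 * n ! ^ 2 := by
            nlinarith [factorial_pos n, Nat.le_self_pow two_ne_zero n !]
        _ ≤ (n + 1) ^ 2 * n ! ^ 2 := by gcongr; omega
        _ = (n + 1)! ^ 2 := by rw [factorial_succ, mul_pow]
    exact Nat.lt_succ_iff.mp <| (factorial_lt (by omega)).mp <|
      lt_of_pow_lt_pow_left₀ 2 (Nat.zero_le _) (ha.trans_lt this)
  by_cases hA : 2 * n ! ≤ a ! ^ 2
  · obtain ⟨H, hH⟩ := exists_perm_subgroup_two_mul_card_eq_factorial (by omega) han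
    exact ⟨H, by nlinarith, by nlinarith⟩
  · obtain ⟨j, hj, hj'⟩ := exists_mul_two_pow_sq_mem (N := n !) (factorial_pos a) (by omega)
    have hjn : a + 2 * j ≤ n := by
      rcases j with _ | i
      · simpa using han
      have hsq : (2 ^ (i + 2) * a !) ^ 2 < ((a + 1) * a !) ^ 2 := by
        have : (2 ^ (i + 2) * a !) ^ 2 = 4 * (a ! * 2 ^ (i + 1)) ^ 2 := by ring
        rw [← factorial_succ]; omega
      have hi : 2 ^ (i + 2) ≤ a := Nat.lt_succ_iff.mp <|
        Nat.lt_of_mul_lt_mul_right (lt_of_pow_lt_pow_left₀ 2 (Nat.zero_le _) hsq)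
      have := add_two_mul_add_two_le_of_factorial_sq_le ha5 hi ha
      omega
    obtain ⟨H, hH⟩ := exists_perm_subgroup_card_eq_factorial_mul_two_pow hjn
    exact ⟨H, hH ▸ hj, hH ▸ hj'.le⟩

/-- For every `n ≥ 7`, the symmetric group `Sₙ` has a subgroup `H` with
`√(n!)/√2 ≤ |H| ≤ √(2·n!)`. -/
theorem stmt11 (n : ℕ) (hn : 7 ≤ n) :
    ∃ H : Subgroup (Equiv.Perm (Fin n)),
      Real.sqrt n.factorial / Real.sqrt 2 ≤ Nat.card H ∧
      (Nat.card H : ℝ) ≤ Real.sqrt (2 * n.factorial) := by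
  obtain ⟨H, hlow, hupp⟩ := exists_perm_subgroup_card_sq_mem hn
  refine ⟨H, ?_, ?_⟩
  · rw [← Real.sqrt_div' _ zero_le_two, Real.sqrt_le_left (Nat.cast_nonneg _),
      div_le_iff₀ two_pos]
    exact_mod_cast hlow.trans_eq (mul_comm _ _)
  · rw [Real.le_sqrt (Nat.cast_nonneg _) (by positivity)]
    exact_mod_cast hupp
end

section
/- For every integer n ≥ 7, the unique real solution y ≥ 1 of y! = √(n!) satisfies ⌊y⌋ ≤ (2n−1)/3. -/
/-!
Let `k = ⌊y⌋`. Since `Γ` is increasing on `[2, ∞)`, `k! = Γ(k + 1) ≤ Γ(y + 1) = √(n!)`, so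
`(k!)² ≤ n!`. It therefore suffices that `n! < (k!)²` whenever `2n ≤ 3k`. Passing from `(n, k)`
to `(n + 3, k + 2)` multiplies `n!` by `(n+1)(n+2)(n+3)` and `(k!)²` by `((k+1)(k+2))²`, which is
at least as large, so the inequality propagates from the cases `n = 7, 8, 9`.
-/

open Nat

lemma succ_mul_succ_mul_succ_le_sq {m j : ℕ} (hm : 2 ≤ m) (hmj : 2 * m ≤ 3 * j) :
    (m + 1) * (m + 2) * (m + 3) ≤ ((j + 1) * (j + 2)) ^ 2 := by
  have hprod : (2 * m + 3) * (2 * m + 6) ≤ 9 * ((j + 1) * (j + 2)) := by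
    nlinarith [Nat.mul_le_mul (show 2 * m + 3 ≤ 3 * (j + 1) by omega)
      (show 2 * m + 6 ≤ 3 * (j + 2) by omega)]
  have hcubic : 81 * ((m + 1) * (m + 2) * (m + 3)) ≤ ((2 * m + 3) * (2 * m + 6)) ^ 2 := by
    obtain ⟨t, rfl⟩ : ∃ t, m = t + 2 := ⟨m - 2, by omega⟩
    ring_nf
    nlinarith [Nat.zero_le t, Nat.zero_le (t ^ 2)]
  nlinarith [Nat.pow_le_pow_left hprod 2]

lemma factorial_lt_factorial_sq {n k : ℕ} (hn : 7 ≤ n) (hnk : 2 * n ≤ 3 * k) :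
    n ! < k ! ^ 2 := by
  induction n using Nat.strong_induction_on generalizing k with
  | _ n ih =>
    by_cases hn10 : n < 10
    · -- `(2 * n + 2) / 3 = ⌈2n/3⌉` is the least admissible `k`.
      have hk : (2 * n + 2) / 3 ≤ k := by omega
      calc n ! < ((2 * n + 2) / 3)! ^ 2 := by interval_cases n <;> decide
        _ ≤ k ! ^ 2 := Nat.pow_le_pow_left (factorial_le hk) 2
    · obtain ⟨m, rfl⟩ : ∃ m, n = m + 3 := ⟨n - 3, by omega⟩
      obtain ⟨j, rfl⟩ : ∃ j, k = j + 2 := ⟨k - 2, by omega⟩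
      have ih' : m ! < j ! ^ 2 := ih m (by omega) (by omega) (by omega)
      have hstep := succ_mul_succ_mul_succ_le_sq (m := m) (j := j) (by omega) (by omega)
      calc (m + 3)! = m ! * ((m + 1) * (m + 2) * (m + 3)) := by
            simp only [factorial_succ]; ring
        _ < j ! ^ 2 * ((m + 1) * (m + 2) * (m + 3)) :=
            Nat.mul_lt_mul_of_pos_right ih' (by positivity)
        _ ≤ j ! ^ 2 * ((j + 1) * (j + 2)) ^ 2 := Nat.mul_le_mul_left _ hstep
        _ = (j + 2)! ^ 2 := by simp only [factorial_succ]; ring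

lemma factorial_floor_le_Gamma {y : ℝ} (hy : 1 ≤ y) : ((⌊y⌋₊)! : ℝ) ≤ Real.Gamma (y + 1) := by
  have hk : (1 : ℝ) ≤ ⌊y⌋₊ := by exact_mod_cast Nat.one_le_floor_iff y |>.2 hy
  have hky : (⌊y⌋₊ : ℝ) ≤ y := Nat.floor_le (by linarith)
  rw [← Real.Gamma_nat_eq_factorial]
  exact Real.Gamma_strictMonoOn_Ici.monotoneOn (by rw [Set.mem_Ici]; linarith)
    (by rw [Set.mem_Ici]; linarith)
    (by linarith)

/-- For every `n ≥ 7`, the unique real solution `y ≥ 1` of `y! = √(n!)`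
(where `y! = Γ(y+1)`) satisfies `⌊y⌋ ≤ (2n−1)/3`. -/
theorem stmt12 (n : ℕ) (hn : 7 ≤ n) (y : ℝ) (hy : 1 ≤ y)
    (hsol : Real.Gamma (y + 1) = Real.sqrt (n.factorial)) :
    ((⌊y⌋₊ : ℕ) : ℝ) ≤ (2 * (n : ℝ) - 1) / 3 := by
  have hsq : ((⌊y⌋₊)! : ℝ) ^ 2 ≤ n ! := by
    rw [← Real.le_sqrt (by positivity) (by positivity), ← hsol]
    exact factorial_floor_le_Gamma hy
  have hlt : 3 * ⌊y⌋₊ + 1 ≤ 2 * n := by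
    by_contra h
    exact (factorial_lt_factorial_sq (k := ⌊y⌋₊) hn (by omega)).not_ge (by exact_mod_cast hsq)
  rw [le_div_iff₀ (by norm_num)]
  have : (3 * ⌊y⌋₊ + 1 : ℝ) ≤ 2 * n := by exact_mod_cast hlt
  linarith
end

section
/- Let K be a subgroup of S_n (acting on {1, …, n}) and let g ∈ S_n. Order permutations by the lexicographic order on their base images [g(1), g(2), …, g(n)]. Then g is the lexicographically least element of its left coset gK if and only if, for every j with 1 ≤ j ≤ n, the point g(j) is the least element of its orbit under the pointwise stabilizer K_{g(1), …, g(j−1)} = {h ∈ K : h(g(i)) = g(i) for all 1 ≤ i < j}. -/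
/-!
Over a well-ordered index set, `toLex x ≤ toLex y` holds exactly when `x i ≤ y i` at every index
`i` before which `x` and `y` agree. Since `(k * g) i = k (g i)`, agreement of `g` and `k * g`
below `j` says that `k` fixes `g 0, …, g (j - 1)`, so the condition at `j` is the orbit condition.
-/

namespace Pi

theorem toLex_le_toLex_iff {ι : Type*} [LinearOrder ι] [WellFoundedLT ι] {β : ι → Type*}
    [∀ i, LinearOrder (β i)] {x y : ∀ i, β i} :
    toLex x ≤ toLex y ↔ ∀ i, (∀ j < i, x j = y j) → x i ≤ y i := by
  refine ⟨fun hxy _ ↦ apply_le_of_toLex hxy, fun h ↦ le_of_not_gt ?_⟩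
  rintro ⟨i, hagree, hlt⟩
  exact (h i fun j hj ↦ (hagree j hj).symm).not_gt hlt

end Pi

/- Mathlib composes permutations as `(k * g) x = k (g x)`, so the paper's coset `gK` is
`{k * g | k ∈ K}`; points are `0`-indexed via `Fin n`. -/
/-- Sims' coset-ordering lemma.  Let `K ≤ Sₙ` and `g ∈ Sₙ`.  Order permutations
lexicographically by their base images `[g(1), …, g(n)]`.  Then `g` is the
lexicographically least element of its coset `gK` if and only if for every `j`,
the point `g(j)` is the least element of its orbit under the pointwise
stabilizer `K_{g(1), …, g(j−1)}`.

(The paper composes permutations so that the base image of `g·k` is obtained by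
applying `k` to the values of `g`; under Mathlib's convention
`(h * g) x = h (g x)`, the coset `gK` of the paper is therefore the set
`{k * g : k ∈ K}`.  Points are `0`-indexed via `Fin n`.) -/
theorem stmt13 (n : ℕ) (K : Subgroup (Equiv.Perm (Fin n))) (g : Equiv.Perm (Fin n)) :
    (∀ k ∈ K, toLex (⇑g) ≤ toLex (⇑(k * g))) ↔
    (∀ j : Fin n, ∀ k ∈ K, (∀ i : Fin n, i < j → k (g i) = g i) → g j ≤ k (g j)) := by
  simp only [Pi.toLex_le_toLex_iff, Equiv.Perm.mul_apply, eq_comm (a := g _)]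
  exact ⟨fun h j k hk ↦ h k hk j, fun h k hk j ↦ h j k hk⟩
end
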